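/- Let A be a finite alphabet, let γ, θ > 0 be real weights with θ < 2γ, and let L ⊆ A* be an arbitrary language. Then there exists m ∈ ℕ such that for every isometry φ ∈ Isom_{lev_{γ,θ}}(L) and every word w ∈ L one has | |φ(w)| − |w| | ≤ m. -/

import Mathlib

/-- Cost structure for Levenshtein edit distance (formerly in Mathlib). -/
structure Levenshtein.Cost (α β δ : Type*) where
  delete : α → δ
  insert : β → δ
  substitute : α → β → δ

namespace Levenshtein

/-- (Implementation detail for `levenshtein`) -/
def impl {α β δ : Type*} [AddZeroClass δ] [Min δ]
    (C : Cost α β δ)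
    (xs : List α) (y : β) (d : {r : List δ // 0 < r.length}) : {r : List δ // 0 < r.length} :=
  let ⟨ds, w⟩ := d
  xs.zip (ds.zip ds.tail) |>.foldr
    (init := ⟨[C.insert y + ds.getLast (List.ne_nil_of_length_pos w)], by simp⟩)
    (fun ⟨x, d₀, d₁⟩ ⟨r, w⟩ =>
      ⟨min (C.delete x + r[0]) (min (C.insert y + d₀) (C.substitute x y + d₁)) :: r, by simp⟩)

/-- (Implementation detail for `levenshtein`) -/
def suffixLevenshtein {α β δ : Type*} [AddZeroClass δ] [Min δ] (C : Cost α β δ)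
    (xs : List α) (ys : List β) : {r : List δ // 0 < r.length} :=
  ys.foldr
    (impl C xs)
    (xs.foldr (init := ⟨[0], by simp⟩) (fun a ⟨r, w⟩ => ⟨(C.delete a + r[0]) :: r, by simp⟩))

end Levenshtein

/-- The Levenshtein distance with costs `C` (formerly in Mathlib). -/
def levenshtein {α β δ : Type*} [AddZeroClass δ] [Min δ] (C : Levenshtein.Cost α β δ)
    (xs : List α) (ys : List β) : δ :=
  let ⟨r, w⟩ := Levenshtein.suffixLevenshtein C xs ys
  r[0]

/-- Cost structure for the generalized Levenshtein distance:
insertions and deletions cost `γ`, substitutions cost `θ`. -/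
def levCost (A : Type*) [DecidableEq A] (γ θ : ℝ) : Levenshtein.Cost A A ℝ where
  delete _ := γ
  insert _ := γ
  substitute a b := if a = b then 0 else θ

/-- The generalized Levenshtein distance `lev_{γ,θ}` between two words over `A`:
the minimal total cost of transforming one word into the other by insertions and
deletions (of cost `γ`) and substitutions (of cost `θ`). -/
def lev {A : Type*} [DecidableEq A] (γ θ : ℝ) (u v : List A) : ℝ :=
  levenshtein (levCost A γ θ) u v

/-- The isometry group of a language `L ⊆ A*` with respect to a distance `d` on `A*`:
the group (under composition) of bijections of `L` preserving `d`. -/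
def IsomGroup {A : Type*} (d : List A → List A → ℝ) (L : Set (List A)) :
    Subgroup (Equiv.Perm L) where
  carrier := {φ : Equiv.Perm L | ∀ u v : L, d (φ u) (φ v) = d u v}
  one_mem' := by intro u v; rfl
  mul_mem' := by intro φ ψ hφ hψ u v; simp only [Equiv.Perm.mul_apply]; rw [hφ, hψ]
  inv_mem' := by
    intro φ hφ u v
    have h := hφ (φ⁻¹ u) (φ⁻¹ v)
    simpa using h.symm


/-!
An isometry `φ` moves every word by a bounded amount as soon as it moves one fixed word `v`
boundedly: comparing `lev (φ v) (φ w) = lev v w` with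
`γ * ||x| - |y|| ≤ lev x y ≤ γ * (|x| + |y|)` (valid for `θ ≤ 2γ`) gives
`||φ w| - |w|| ≤ |φ v| + 3|v|`.

So it suffices that the orbit of `v` has bounded length. Otherwise Higman's lemma yields orbit
words `x₁ <+ x₂ <+ x₃` (as subsequences) with large length gaps. Distances along such a chain
add up, being realised by insertions alone, so an isometry `ψ` with `ψ x₂ = v` produces long
words `u = ψ x₁`, `u' = ψ x₃` with `lev u v + lev v u' ≤ lev u u'`. Together with
`lev u u' ≤ θ * min |u| |u'| + γ * ||u| - |u'||` this forces `(2γ - θ) * min |u| |u'| ≤ 2γ|v|`,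
which fails for `θ < 2γ` once the gaps are large.
-/

namespace Levenshtein

variable {α β δ : Type*} [AddZeroClass δ] [Min δ] (C : Cost α β δ)

theorem impl_cons (x : α) (xs : List α) (y : β) (d : δ) (ds : List δ)
    (w : 0 < (d :: ds).length) (w' : 0 < ds.length) :
    impl C (x :: xs) y ⟨d :: ds, w⟩ =
      ⟨min (C.delete x + (impl C xs y ⟨ds, w'⟩).1[0]'(impl C xs y ⟨ds, w'⟩).2)
        (min (C.insert y + d) (C.substitute x y + ds[0])) :: (impl C xs y ⟨ds, w'⟩).1,
        by simp⟩ := by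
  cases ds with
  | nil => simp at w'
  | cons d' ds => rfl

theorem impl_length (xs : List α) (y : β) (d : {r : List δ // 0 < r.length})
    (w : d.1.length = xs.length + 1) : (impl C xs y d).1.length = xs.length + 1 := by
  induction xs generalizing d with
  | nil => rfl
  | cons x xs ih =>
    obtain ⟨_ | ⟨d₁, _ | ⟨d₂, ds⟩⟩, hd⟩ := d
    · simp at w
    · simp at w
    · rw [impl_cons C x xs y d₁ (d₂ :: ds) hd (by simp)]
      exact congrArg (· + 1) (ih ⟨d₂ :: ds, by simp⟩ (by simpa using w))

theorem suffixLevenshtein_length (xs : List α) (ys : List β) :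
    (suffixLevenshtein C xs ys).1.length = xs.length + 1 := by
  induction ys with
  | nil =>
    induction xs with
    | nil => rfl
    | cons x xs ih => exact congrArg (· + 1) ih
  | cons y ys ih => exact impl_length C xs y _ ih

theorem suffixLevenshtein_cons₁ (x : α) (xs : List α) (ys : List β) :
    (suffixLevenshtein C (x :: xs) ys).1 =
      levenshtein C (x :: xs) ys :: (suffixLevenshtein C xs ys).1 := by
  induction ys with
  | nil => rfl
  | cons y ys ih =>
    have head_cons_tail : ∀ (l : List δ) (h : 0 < l.length), l = l[0] :: l.tail
      | _ :: _, _ => rfl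
    have hS : suffixLevenshtein C (x :: xs) ys =
        ⟨levenshtein C (x :: xs) ys :: (suffixLevenshtein C xs ys).1, by simp⟩ := Subtype.ext ih
    refine (head_cons_tail _ (suffixLevenshtein C (x :: xs) (y :: ys)).2).trans (congrArg _ ?_)
    change (impl C (x :: xs) y (suffixLevenshtein C (x :: xs) ys)).1.tail
      = (impl C xs y (suffixLevenshtein C xs ys)).1
    rw [hS, impl_cons C x xs y _ _ _ (by simp [suffixLevenshtein_length])]
    rfl

end Levenshtein

section levenshtein

variable {α β δ : Type*} [AddZeroClass δ] [Min δ] {C : Levenshtein.Cost α β δ}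

theorem levenshtein_nil_nil : levenshtein C ([] : List α) ([] : List β) = 0 := rfl

theorem levenshtein_cons_nil (x : α) (xs : List α) :
    levenshtein C (x :: xs) ([] : List β) = C.delete x + levenshtein C xs ([] : List β) := rfl

theorem levenshtein_nil_cons (y : β) (ys : List β) :
    levenshtein C ([] : List α) (y :: ys) = C.insert y + levenshtein C ([] : List α) ys := by
  have hlen := Levenshtein.suffixLevenshtein_length C ([] : List α) ys
  change (Levenshtein.impl C [] y (Levenshtein.suffixLevenshtein C [] ys)).1[0]'
      (Levenshtein.impl C [] y _).2 =
    C.insert y +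
      (Levenshtein.suffixLevenshtein C [] ys).1[0]'(Levenshtein.suffixLevenshtein C [] ys).2
  generalize Levenshtein.suffixLevenshtein C [] ys = s at hlen ⊢
  obtain ⟨_ | ⟨d, _ | ⟨d', l⟩⟩, hs⟩ := s <;> simp at hlen
  rfl

theorem levenshtein_cons_cons (x : α) (xs : List α) (y : β) (ys : List β) :
    levenshtein C (x :: xs) (y :: ys) =
      min (C.delete x + levenshtein C xs (y :: ys))
        (min (C.insert y + levenshtein C (x :: xs) ys)
          (C.substitute x y + levenshtein C xs ys)) := by
  have hS : Levenshtein.suffixLevenshtein C (x :: xs) ys =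
      ⟨levenshtein C (x :: xs) ys :: (Levenshtein.suffixLevenshtein C xs ys).1, by simp⟩ :=
    Subtype.ext (Levenshtein.suffixLevenshtein_cons₁ C x xs ys)
  change (Levenshtein.impl C (x :: xs) y (Levenshtein.suffixLevenshtein C (x :: xs) ys)).1[0]'
    (Levenshtein.impl C (x :: xs) y _).2 = _
  rw [hS, Levenshtein.impl_cons C x xs y _ _ _
    (by simp [Levenshtein.suffixLevenshtein_length])]
  rfl

end levenshtein

section lev

variable {A : Type*} [DecidableEq A] {γ θ : ℝ}

theorem lev_nil_nil : lev γ θ ([] : List A) [] = 0 := levenshtein_nil_nil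

theorem lev_cons_nil (x : A) (xs : List A) : lev γ θ (x :: xs) [] = γ + lev γ θ xs [] :=
  levenshtein_cons_nil x xs

theorem lev_nil_cons (y : A) (ys : List A) : lev γ θ [] (y :: ys) = γ + lev γ θ [] ys :=
  levenshtein_nil_cons y ys

theorem lev_cons_cons (x : A) (xs : List A) (y : A) (ys : List A) :
    lev γ θ (x :: xs) (y :: ys) =
      min (γ + lev γ θ xs (y :: ys))
        (min (γ + lev γ θ (x :: xs) ys) ((if x = y then 0 else θ) + lev γ θ xs ys)) :=
  levenshtein_cons_cons x xs y ys

theorem lev_nil_left (v : List A) : lev γ θ [] v = γ * v.length := by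
  induction v with
  | nil => simp [lev_nil_nil]
  | cons y ys ih => rw [lev_nil_cons, ih, List.length_cons]; push_cast; ring

theorem lev_nil_right (u : List A) : lev γ θ u [] = γ * u.length := by
  induction u with
  | nil => simp [lev_nil_nil]
  | cons x xs ih => rw [lev_cons_nil, ih, List.length_cons]; push_cast; ring

theorem abs_length_sub_le_lev (hγ : 0 ≤ γ) (hθ : 0 ≤ θ) (u v : List A) :
    γ * |(u.length : ℝ) - v.length| ≤ lev γ θ u v := by
  suffices key : ∀ u v : List A,
      γ * (u.length - v.length) ≤ lev γ θ u v ∧ γ * (v.length - u.length) ≤ lev γ θ u v by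
    obtain ⟨h₁, h₂⟩ := key u v
    rcases abs_cases ((u.length : ℝ) - v.length) with ⟨h, -⟩ | ⟨h, -⟩ <;> rw [h] <;> linarith
  intro u
  induction u with
  | nil =>
    intro v
    have := mul_nonneg hγ (Nat.cast_nonneg (α := ℝ) v.length)
    rw [lev_nil_left, List.length_nil, Nat.cast_zero]
    constructor <;> linarith
  | cons x xs ihu =>
    intro v
    induction v with
    | nil =>
      have := mul_nonneg hγ (Nat.cast_nonneg (α := ℝ) (x :: xs).length)
      rw [lev_nil_right, List.length_nil, Nat.cast_zero]
      constructor <;> linarith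
    | cons y ys ihv =>
      have hsub : (0 : ℝ) ≤ if x = y then 0 else θ := by split_ifs <;> simp [hθ]
      obtain ⟨h₁, h₂⟩ := ihu (y :: ys)
      obtain ⟨h₃, h₄⟩ := ihu ys
      simp only [List.length_cons, Nat.cast_add, Nat.cast_one] at *
      rw [lev_cons_cons]
      constructor <;> refine le_min ?_ (le_min ?_ ?_) <;> linarith

theorem lev_le_min_add_abs (hθ : 0 ≤ θ) (u v : List A) :
    lev γ θ u v ≤ θ * min (u.length : ℝ) v.length + γ * |(u.length : ℝ) - v.length| := by
  induction u generalizing v with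
  | nil => simp [lev_nil_left]
  | cons x xs ihu =>
    cases v with
    | nil =>
      have := Nat.cast_nonneg (α := ℝ) (x :: xs).length
      simp only [lev_nil_right, List.length_nil, Nat.cast_zero, sub_zero, min_eq_right this,
        abs_of_nonneg this, mul_zero, zero_add, le_refl]
    | cons y ys =>
      have hsub : (if x = y then 0 else θ) ≤ θ := by split_ifs <;> simp [hθ]
      have h := ihu ys
      rw [lev_cons_cons]
      refine (min_le_right _ _).trans ((min_le_right _ _).trans ?_)
      simp only [List.length_cons, Nat.cast_add, Nat.cast_one, add_sub_add_right_eq_sub,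
        min_add_add_right]
      linarith

theorem lev_le_length_add (hθ : 0 ≤ θ) (hθγ : θ ≤ 2 * γ) (u v : List A) :
    lev γ θ u v ≤ γ * (u.length + v.length) := by
  refine (lev_le_min_add_abs hθ u v).trans ?_
  rcases le_total (u.length : ℝ) v.length with h | h
  · rw [min_eq_left h, abs_of_nonpos (by linarith)]; nlinarith
  · rw [min_eq_right h, abs_of_nonneg (by linarith)]; nlinarith

theorem lev_le_of_sublist {u v : List A} (h : u.Sublist v) :
    lev γ θ u v ≤ γ * (v.length - u.length) := by
  induction h with
  | slnil => simp [lev_nil_nil]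
  | @cons l₁ l₂ a _ ih =>
    have step : lev γ θ l₁ (a :: l₂) ≤ γ + lev γ θ l₁ l₂ := by
      cases l₁ with
      | nil => rw [lev_nil_cons]
      | cons x xs => rw [lev_cons_cons]; exact (min_le_right _ _).trans (min_le_left _ _)
    simp only [List.length_cons, Nat.cast_add, Nat.cast_one]
    linarith
  | @cons_cons l₁ l₂ a _ ih =>
    have step : lev γ θ (a :: l₁) (a :: l₂) ≤ lev γ θ l₁ l₂ := by
      rw [lev_cons_cons]
      exact (min_le_right _ _).trans ((min_le_right _ _).trans (by simp))
    simp only [List.length_cons, Nat.cast_add, Nat.cast_one, add_sub_add_right_eq_sub]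
    linarith

theorem length_le_of_lev_le (hγ : 0 < γ) (hθ : 0 ≤ θ) (hθγ : θ ≤ 2 * γ) {x y x' y' : List A}
    (h : lev γ θ x y ≤ lev γ θ x' y') : y.length ≤ x.length + x'.length + y'.length := by
  have hlower : γ * ((y.length : ℝ) - x.length) ≤ lev γ θ x y :=
    (mul_le_mul_of_nonneg_left (abs_sub_comm (x.length : ℝ) y.length ▸ le_abs_self _)
      hγ.le).trans (abs_length_sub_le_lev hγ.le hθ x y)
  have hupper := lev_le_length_add hθ hθγ x' y'
  have : (y.length : ℝ) - x.length ≤ x'.length + y'.length :=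
    le_of_mul_le_mul_left (by linarith) hγ
  exact_mod_cast (by linarith : (y.length : ℝ) ≤ x.length + x'.length + y'.length)

theorem lev_add_lev_le_of_sublist (hγ : 0 ≤ γ) (hθ : 0 ≤ θ) {x y z : List A}
    (hxy : x.Sublist y) (hyz : y.Sublist z) :
    lev γ θ x y + lev γ θ y z ≤ lev γ θ x z := by
  have hxz := abs_length_sub_le_lev hγ hθ x z
  rw [abs_sub_comm, abs_of_nonneg (sub_nonneg.2 (by exact_mod_cast (hxy.trans hyz).length_le))]
    at hxz
  linarith [lev_le_of_sublist (γ := γ) (θ := θ) hxy, lev_le_of_sublist (γ := γ) (θ := θ) hyz]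

theorem min_length_le_of_lev_add_le (hγ : 0 ≤ γ) (hθ : 0 ≤ θ) {u v u' : List A}
    (h : lev γ θ u v + lev γ θ v u' ≤ lev γ θ u u') :
    (2 * γ - θ) * min (u.length : ℝ) u'.length ≤ 2 * γ * v.length := by
  have h₁ : γ * ((u.length : ℝ) - v.length) ≤ lev γ θ u v :=
    (mul_le_mul_of_nonneg_left (le_abs_self _) hγ).trans (abs_length_sub_le_lev hγ hθ u v)
  have h₂ : γ * ((u'.length : ℝ) - v.length) ≤ lev γ θ v u' :=
    (mul_le_mul_of_nonneg_left (abs_sub_comm (v.length : ℝ) u'.length ▸ le_abs_self _)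
      hγ).trans (abs_length_sub_le_lev hγ hθ v u')
  have h₃ := lev_le_min_add_abs (γ := γ) hθ u u'
  rcases le_total (u.length : ℝ) u'.length with hle | hle
  · rw [min_eq_left hle, abs_of_nonpos (by linarith)] at *
    linarith
  · rw [min_eq_right hle, abs_of_nonneg (by linarith)] at *
    linarith

end lev

theorem exists_sublist_subseq {A : Type*} [Finite A] (f : ℕ → List A) :
    ∃ g : ℕ ↪o ℕ, ∀ m n, m ≤ n → (f (g m)).Sublist (f (g n)) := by
  have : IsPreorder (List A) (List.SublistForall₂ (· = ·)) := {}
  have higman := (Set.finite_univ (α := A)).partiallyWellOrderedOn (r := (· = ·))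
    |>.partiallyWellOrderedOn_sublistForall₂ (· = ·)
  obtain ⟨g, hg⟩ := higman.exists_monotone_subseq (f := f) fun n x _ => Set.mem_univ x
  refine ⟨g, fun m n hmn => ?_⟩
  obtain ⟨l, hl, hsub⟩ := List.sublistForall₂_iff.1 (hg m n hmn)
  rw [List.forall₂_eq_eq_eq] at hl
  rwa [hl]

theorem exists_sublist_triple {A : Type*} [Finite A] (f : ℕ → List A)
    (hf : ∀ n, n ≤ (f n).length) (G : ℕ) :
    ∃ a b c, (f a).Sublist (f b) ∧ (f b).Sublist (f c) ∧
      (f a).length + G ≤ (f b).length ∧ (f b).length + G ≤ (f c).length := by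
  obtain ⟨g, hg⟩ := exists_sublist_subseq f
  have hlen (i : ℕ) : i ≤ (f (g i)).length := (g.strictMono.id_le i).trans (hf (g i))
  set i := (f (g 0)).length + G
  set j := (f (g i)).length + G
  exact ⟨g 0, g i, g j, hg 0 i (Nat.zero_le _), hg i j (by grind), hlen i, hlen j⟩

section isometry

variable {A : Type*} [DecidableEq A] {γ θ : ℝ} {L : Set (List A)}

theorem abs_length_apply_sub_le (hγ : 0 < γ) (hθ : 0 ≤ θ) (hθγ : θ ≤ 2 * γ)
    {φ : Equiv.Perm L} (hφ : φ ∈ IsomGroup (lev γ θ) L) (v w : L) :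
    |((φ w : List A).length : ℤ) - (w : List A).length| ≤
      (φ v : List A).length + 3 * (v : List A).length := by
  have h₁ := length_le_of_lev_le hγ hθ hθγ (hφ v w).le
  have h₂ := length_le_of_lev_le hγ hθ hθγ (x := (φ⁻¹ v : L)) (y := w) (x' := v) (y' := φ w)
    (by simpa using (hφ (φ⁻¹ v) w).ge)
  have h₃ := length_le_of_lev_le hγ hθ hθγ (x := v) (y := (φ⁻¹ v : L)) (x' := φ v) (y' := v)
    (by simpa using (hφ v (φ⁻¹ v)).ge)
  rw [abs_le]
  constructor <;> omega

theorem exists_length_apply_le [Finite A] (hγ : 0 < γ) (hθ : 0 ≤ θ) (hθγ : θ < 2 * γ) (v : L) :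
    ∃ M : ℕ, ∀ φ ∈ IsomGroup (lev γ θ) L, (φ v : List A).length ≤ M := by
  by_contra! hunbounded
  choose Φ hΦ hlen using hunbounded
  set N := (v : List A).length
  have hgap : 0 < 2 * γ - θ := by linarith
  obtain ⟨G, hG⟩ := exists_nat_gt (N + 2 * γ * N / (2 * γ - θ))
  obtain ⟨a, b, c, hab, hbc, hGab, hGbc⟩ :=
    exists_sublist_triple (fun k => (Φ k v : List A)) (fun k => (hlen k).le) G
  set ψ := (Φ b)⁻¹
  have hψ : ψ ∈ IsomGroup (lev γ θ) L := inv_mem (hΦ b)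
  have hψv : ψ (Φ b v) = v := by simp [ψ]
  have e₁ := hψ (Φ a v) (Φ b v)
  have e₂ := hψ (Φ b v) (Φ c v)
  have e₃ := hψ (Φ a v) (Φ c v)
  rw [hψv] at e₁ e₂
  set u : List A := ↑(ψ (Φ a v))
  set u' : List A := ↑(ψ (Φ c v))
  have hgeo : lev γ θ u v + lev γ θ v u' ≤ lev γ θ u u' := by
    rw [e₁, e₂, e₃]
    exact lev_add_lev_le_of_sublist hγ.le hθ hab hbc
  have hu : G ≤ u.length + N := by
    have := length_le_of_lev_le hγ hθ hθγ.le e₁.ge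
    omega
  have hu' : G ≤ u'.length + N := by
    have := length_le_of_lev_le hγ hθ hθγ.le e₂.ge
    omega
  have hmin : (G : ℝ) - N ≤ min (u.length : ℝ) u'.length := by
    refine le_min ?_ ?_
    · linarith [(by exact_mod_cast hu : (G : ℝ) ≤ u.length + N)]
    · linarith [(by exact_mod_cast hu' : (G : ℝ) ≤ u'.length + N)]
  have hbig : 2 * γ * N < (2 * γ - θ) * (G - N) := by
    rw [mul_comm (2 * γ - θ)]
    exact (div_lt_iff₀ hgap).1 (by linarith)
  linarith [min_length_le_of_lev_add_le hγ.le hθ hgeo, mul_le_mul_of_nonneg_left hmin hgap.le]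

end isometry

/-- For any finite alphabet `A`, weights `0 < γ`, `0 < θ < 2γ`, and any
language `L ⊆ A*`, there is `m : ℕ` bounding `||φ(w)| - |w||` for every isometry `φ` of
`L` w.r.t. `lev_{γ,θ}` and every word `w ∈ L`. -/
theorem stmt_0 {A : Type*} [Fintype A] [DecidableEq A] (γ θ : ℝ)
    (hγ : 0 < γ) (hθ : 0 < θ) (hθ2 : θ < 2 * γ) (L : Set (List A)) :
    ∃ m : ℕ, ∀ φ ∈ IsomGroup (lev γ θ) L, ∀ w : L,
      |((φ w : List A).length : ℤ) - ((w : List A).length : ℤ)| ≤ (m : ℤ) := by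
  rcases isEmpty_or_nonempty L with _ | ⟨⟨v⟩⟩
  · exact ⟨0, fun _ _ w => isEmptyElim w⟩
  obtain ⟨M, hM⟩ := exists_length_apply_le hγ hθ.le hθ2 v
  refine ⟨M + 3 * (v : List A).length, fun φ hφ w => ?_⟩
  have hdisp := abs_length_apply_sub_le hγ hθ.le hθ2.le hφ v w
  have horbit := hM φ hφ
  push_cast
  omega
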